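/- Define the area integrand F(A) := (1 + |A|² + Σ_{|α| ≥ 2} (det M_{αβ}(A))²)^{1/2} on n × m matrices A, where M_{αβ}(A) runs over all k × k minors with k ≥ 2. Then for |A| ≤ 1, |∂_{A_{ij}} F(A) − A_{ij}| ≤ C |A|³ for all entries (i,j), with C depending only on m and n. -/

import Mathlib

/-!
Write `E = E_{ij}`. Every minor of `A + tE` is affine in `t`, since only one of its rows moves:
its value at `t = 0` is a minor of `A` of size at least two, hence `O(|A|²)`, and its slope is
the determinant of that minor with one row replaced by a unit vector, hence `O(|A|)`. So
`F(A + tE)² = 1 + |A|² + 2tA_{ij} + t² + Σ (c + tb)²`,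
whence `∂_{ij}F(A) = (A_{ij} + Σ cb) / F(A)`.
As `F(A) - 1 ≤ |A|² + Σ c² = O(|A|²)` and `Σ cb = O(|A|³)`, the claim follows.
-/

noncomputable section

/-- The area integrand `F(A) = (1 + |A|² + Σ_{|α|≥2} (det M_{αβ}(A))²)^{1/2}`, where the sum
runs over all `k × k` minors of `A` with `k ≥ 2`. -/
def areaIntegrand (n m : ℕ) (A : Matrix (Fin n) (Fin m) ℝ) : ℝ :=
  Real.sqrt (1 + (∑ i, ∑ j, (A i j) ^ 2) +
    ∑ p : Finset (Fin n) × Finset (Fin m),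
      (if h : p.1.card = p.2.card ∧ 2 ≤ p.1.card then
          Matrix.det (Matrix.of fun i j : Fin p.1.card =>
            A (p.1.orderIsoOfFin rfl i) (p.2.orderIsoOfFin h.1.symm j))
        else 0) ^ 2)

/-- The Hilbert–Schmidt (Frobenius) norm of a matrix. -/
def frob (n m : ℕ) (A : Matrix (Fin n) (Fin m) ℝ) : ℝ :=
  Real.sqrt (∑ i, ∑ j, (A i j) ^ 2)

open Finset Nat

lemma abs_det_le_factorial_mul_pow {ι : Type*} [Fintype ι] [DecidableEq ι]
    (M : Matrix ι ι ℝ) (S : Finset ι) {a : ℝ} (h1 : ∀ x y, |M x y| ≤ 1)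
    (ha : ∀ x ∈ S, ∀ y, |M x y| ≤ a) :
    |M.det| ≤ (Fintype.card ι)! * a ^ #S := by
  have hσ : ∀ σ : Equiv.Perm ι, ∏ x, |M (σ x) x| ≤ a ^ #S := by
    intro σ
    rw [← Equiv.prod_comp σ.symm, ← prod_mul_prod_compl S]
    simp only [Equiv.apply_symm_apply]
    calc (∏ y ∈ S, |M y (σ.symm y)|) * ∏ y ∈ Sᶜ, |M y (σ.symm y)|
        ≤ ∏ y ∈ S, |M y (σ.symm y)| :=
          mul_le_of_le_one_right (prod_nonneg fun _ _ => abs_nonneg _)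
            (prod_le_one (fun _ _ => abs_nonneg _) fun y _ => h1 _ _)
      _ ≤ a ^ #S :=
          (prod_le_prod (fun _ _ => abs_nonneg _) fun y hy => ha y hy _).trans_eq (prod_const a)
  calc |M.det| = |∑ σ : Equiv.Perm ι, Equiv.Perm.sign σ • ∏ x, M (σ x) x| := by
        rw [Matrix.det_apply]
    _ ≤ ∑ σ : Equiv.Perm ι, |Equiv.Perm.sign σ • ∏ x, M (σ x) x| :=
        abs_sum_le_sum_abs _ _
    _ ≤ ∑ _σ : Equiv.Perm ι, a ^ #S := by
        gcongr with σ
        rw [Units.smul_def, zsmul_eq_mul, abs_mul, abs_unit_intCast, one_mul, abs_prod]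
        exact hσ σ
    _ = (Fintype.card ι)! * a ^ #S := by
        rw [sum_const, Finset.card_univ, Fintype.card_perm, nsmul_eq_mul]

lemma abs_det_updateRow_le {ι : Type*} [Fintype ι] [DecidableEq ι] (B : Matrix ι ι ℝ)
    (x₀ : ι) (v : ι → ℝ) {a : ℝ} (ha₁ : a ≤ 1) (hB : ∀ x y, |B x y| ≤ a)
    (hv : ∀ y, |v y| ≤ 1) :
    |(B.updateRow x₀ v).det| ≤ (Fintype.card ι)! * a ^ (Fintype.card ι - 1) := by
  refine (abs_det_le_factorial_mul_pow _ (univ.erase x₀) (fun x y => ?_)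
    fun x hx y => ?_).trans_eq (by rw [card_erase_of_mem (mem_univ _), Finset.card_univ])
  · rcases eq_or_ne x x₀ with rfl | hx
    · simpa using hv y
    · rw [Matrix.updateRow_ne hx]
      exact (hB _ _).trans ha₁
  · rw [Matrix.updateRow_ne (ne_of_mem_erase hx)]
    exact hB _ _

lemma det_add_smul_of_forall_ne_eq_zero {R ι : Type*} [CommRing R] [Fintype ι]
    [DecidableEq ι] (B M : Matrix ι ι R) (i₀ : ι) (hM : ∀ x ≠ i₀, M x = 0) (t : R) :
    (B + t • M).det = B.det + t * (B.updateRow i₀ (M i₀)).det := by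
  have : B + t • M = B.updateRow i₀ (B i₀ + t • M i₀) := by
    ext x y
    rcases eq_or_ne x i₀ with rfl | hx
    · simp
    · simp [hx, hM x hx]
  rw [this, Matrix.det_updateRow_add, Matrix.updateRow_eq_self, Matrix.det_updateRow_smul]

lemma abs_div_two_sqrt_one_add_sub_le (x r q : ℝ) (hq : 0 ≤ q) :
    |(2 * x + r) / (2 * √(1 + q)) - x| ≤ |x| * q + |r| := by
  set s := √(1 + q)
  have hs1 : 1 ≤ s := Real.one_le_sqrt.mpr (by linarith)
  have hsq : s ≤ 1 + q := by
    have := Real.sq_sqrt (show 0 ≤ 1 + q by linarith)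
    nlinarith
  have hs0 : 0 < s := by linarith
  have : (2 * x + r) / (2 * s) - x = x * ((1 - s) / s) + r / (2 * s) := by
    field_simp; ring
  rw [this]
  refine (abs_add_le _ _).trans (add_le_add ?_ ?_)
  · rw [abs_mul]
    gcongr
    rw [abs_div, abs_of_nonpos (by linarith), abs_of_pos hs0, div_le_iff₀ hs0]
    nlinarith
  · rw [abs_div, abs_of_pos (by linarith : (0 : ℝ) < 2 * s)]
    exact _root_.div_le_self (abs_nonneg r) (by linarith)

lemma hasDerivAt_sum_sq_affine {ι : Type*} (s : Finset ι) (c b : ι → ℝ) :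
    HasDerivAt (fun t => ∑ x ∈ s, (c x + t * b x) ^ 2) (∑ x ∈ s, 2 * c x * b x) 0 := by
  refine HasDerivAt.fun_sum fun x _ => ?_
  simpa using (((hasDerivAt_id (0 : ℝ)).mul_const (b x)).const_add (c x)).fun_pow 2

section

variable {n m : ℕ}

def areaMinor (A : Matrix (Fin n) (Fin m) ℝ) (p : Finset (Fin n) × Finset (Fin m)) : ℝ :=
  if h : #p.1 = #p.2 ∧ 2 ≤ #p.1 then
    (A.submatrix (fun x => (p.1.orderIsoOfFin rfl x : Fin n))
      (fun y => (p.2.orderIsoOfFin h.1.symm y : Fin m))).det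
  else 0

lemma areaIntegrand_eq (A : Matrix (Fin n) (Fin m) ℝ) :
    areaIntegrand n m A = √(1 + ∑ k, ∑ l, A k l ^ 2 + ∑ p, areaMinor A p ^ 2) := rfl

lemma abs_le_frob (A : Matrix (Fin n) (Fin m) ℝ) (k : Fin n) (l : Fin m) :
    |A k l| ≤ frob n m A :=
  Real.abs_le_sqrt <| calc
    A k l ^ 2 ≤ ∑ l', A k l' ^ 2 :=
      Finset.single_le_sum (f := fun l' => A k l' ^ 2) (fun _ _ => sq_nonneg _) (mem_univ l)
    _ ≤ ∑ k', ∑ l', A k' l' ^ 2 :=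
      Finset.single_le_sum (f := fun k' => ∑ l', A k' l' ^ 2) (fun _ _ => by positivity)
        (mem_univ k)

variable {A : Matrix (Fin n) (Fin m) ℝ} {a : ℝ}

lemma abs_areaMinor_le (ha₀ : 0 ≤ a) (ha₁ : a ≤ 1) (hA : ∀ k l, |A k l| ≤ a)
    (p : Finset (Fin n) × Finset (Fin m)) : |areaMinor A p| ≤ n ! * a ^ 2 := by
  unfold areaMinor
  split_ifs with h
  · have hk : #p.1 ≤ n := (card_le_univ p.1).trans_eq (Fintype.card_fin n)
    refine (abs_det_le_factorial_mul_pow _ univ (fun x y => (hA _ _).trans ha₁)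
      fun x _ y => hA _ _).trans ?_
    rw [Finset.card_univ, Fintype.card_fin]
    exact mul_le_mul (mod_cast factorial_le hk) (pow_le_pow_of_le_one ha₀ ha₁ h.2)
      (by positivity) (by positivity)
  · simp only [abs_zero]
    positivity

lemma areaMinor_sq_le (ha₀ : 0 ≤ a) (ha₁ : a ≤ 1) (hA : ∀ k l, |A k l| ≤ a)
    (p : Finset (Fin n) × Finset (Fin m)) : areaMinor A p ^ 2 ≤ (n ! : ℝ) ^ 2 * a ^ 2 :=
  calc areaMinor A p ^ 2 = |areaMinor A p| ^ 2 := (sq_abs _).symm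
    _ ≤ (n ! * a ^ 2) ^ 2 := by gcongr; exact abs_areaMinor_le ha₀ ha₁ hA p
    _ = (n ! : ℝ) ^ 2 * (a ^ 2) ^ 2 := by ring
    _ ≤ (n ! : ℝ) ^ 2 * a ^ 2 := mul_le_mul_of_nonneg_left
        (pow_le_of_le_one (sq_nonneg a) (pow_le_one₀ ha₀ ha₁) two_ne_zero) (by positivity)

lemma abs_two_mul_areaMinor_mul_le (ha₀ : 0 ≤ a) (ha₁ : a ≤ 1) (hA : ∀ k l, |A k l| ≤ a)
    {b : ℝ} (hb : |b| ≤ n ! * a) (p : Finset (Fin n) × Finset (Fin m)) :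
    |2 * areaMinor A p * b| ≤ 2 * (n ! : ℝ) ^ 2 * a ^ 3 := by
  rw [abs_mul, abs_mul, abs_two]
  calc 2 * |areaMinor A p| * |b| ≤ 2 * (n ! * a ^ 2) * (n ! * a) := by
        gcongr; exact abs_areaMinor_le ha₀ ha₁ hA p
    _ = 2 * (n ! : ℝ) ^ 2 * a ^ 3 := by ring

lemma exists_areaMinor_add_smul_single (ha₀ : 0 ≤ a) (ha₁ : a ≤ 1)
    (hA : ∀ k l, |A k l| ≤ a) (i : Fin n) (j : Fin m) (p : Finset (Fin n) × Finset (Fin m)) :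
    ∃ b, |b| ≤ n ! * a ∧
      ∀ t : ℝ, areaMinor (A + t • Matrix.single i j 1) p = areaMinor A p + t * b := by
  unfold areaMinor
  split_ifs with h
  swap
  · exact ⟨0, by simp only [abs_zero]; positivity, by simp⟩
  set e : Fin #p.1 → Fin n := fun x => p.1.orderIsoOfFin rfl x
  set f : Fin #p.1 → Fin m := fun y => p.2.orderIsoOfFin h.1.symm y
  obtain ⟨x₀, hx₀⟩ : ∃ x₀, ∀ x ≠ x₀, e x ≠ i := by
    by_cases hi : ∃ x, e x = i
    · obtain ⟨x₀, rfl⟩ := hi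
      exact ⟨x₀, fun x hx he => hx ((OrderIso.injective _) (Subtype.val_injective he))⟩
    · push Not at hi
      exact ⟨⟨0, by omega⟩, fun x _ => hi x⟩
  set M := (Matrix.single i j (1 : ℝ)).submatrix e f
  have hM : ∀ x ≠ x₀, M x = 0 := by
    intro x hx
    ext y
    simp [M, (hx₀ x hx).symm]
  refine ⟨((A.submatrix e f).updateRow x₀ (M x₀)).det, ?_, fun t => ?_⟩
  · have hk : #p.1 ≤ n := (card_le_univ p.1).trans_eq (Fintype.card_fin n)
    have hM₁ : ∀ y, |M x₀ y| ≤ 1 := fun y => by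
      simp only [M, Matrix.submatrix_apply, Matrix.single_apply]
      split_ifs <;> simp
    refine (abs_det_updateRow_le _ x₀ _ ha₁ (fun x y => hA _ _) hM₁).trans ?_
    rw [Fintype.card_fin]
    exact mul_le_mul (mod_cast factorial_le hk) (pow_le_of_le_one ha₀ ha₁ (by omega))
      (by positivity) (by positivity)
  · have : (A + t • Matrix.single i j 1).submatrix e f = A.submatrix e f + t • M := rfl
    rw [this, det_add_smul_of_forall_ne_eq_zero _ _ x₀ hM]

lemma hasDerivAt_areaIntegrand_add_smul_single (A : Matrix (Fin n) (Fin m) ℝ) (i : Fin n)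
    (j : Fin m) (b : Finset (Fin n) × Finset (Fin m) → ℝ)
    (hb : ∀ p (t : ℝ), areaMinor (A + t • Matrix.single i j 1) p = areaMinor A p + t * b p) :
    HasDerivAt (fun t : ℝ => areaIntegrand n m (A + t • Matrix.single i j 1))
      ((2 * A i j + ∑ p, 2 * areaMinor A p * b p) /
        (2 * √(1 + (∑ k, ∑ l, A k l ^ 2 + ∑ p, areaMinor A p ^ 2)))) 0 := by
  have hentries :
      HasDerivAt (fun t : ℝ => ∑ k, ∑ l, (A + t • Matrix.single i j (1 : ℝ)) k l ^ 2)
        (2 * A i j) 0 := by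
    refine ((HasDerivAt.fun_sum (u := univ) fun k _ =>
      hasDerivAt_sum_sq_affine univ (A k) (fun l => Matrix.single i j (1 : ℝ) k l)).congr_deriv
        ?_).congr_of_eventuallyEq (.of_forall fun t => ?_)
    · simp [Matrix.single_apply, ite_and]
    · simp [Matrix.single_apply]
  have hminors : HasDerivAt (fun t : ℝ => ∑ p, areaMinor (A + t • Matrix.single i j 1) p ^ 2)
      (∑ p, 2 * areaMinor A p * b p) 0 := by
    simpa only [hb] using hasDerivAt_sum_sq_affine univ (areaMinor A) b
  have hpos : 0 < 1 + (∑ k, ∑ l, A k l ^ 2 + ∑ p, areaMinor A p ^ 2) := by positivity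
  simp_rw [areaIntegrand_eq, add_assoc]
  simpa [add_assoc] using ((hentries.add hminors).const_add 1).sqrt (by simpa using hpos.ne')

end

/-- For `|A| ≤ 1` the entries of the gradient of the area integrand satisfy
`|∂_{A_{ij}} F(A) − A_{ij}| ≤ C |A|³`, with `C = C(m,n)`. -/
theorem stmt17 (n m : ℕ) :
    ∃ C > (0 : ℝ),
      ∀ A : Matrix (Fin n) (Fin m) ℝ, frob n m A ≤ 1 →
        ∀ (i : Fin n) (j : Fin m),
          |deriv (fun t : ℝ => areaIntegrand n m (A + t • Matrix.single i j 1)) 0 -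
              A i j| ≤ C * frob n m A ^ 3 := by
  set P : ℝ := (Fintype.card (Finset (Fin n) × Finset (Fin m)) : ℝ)
  set N : ℝ := (n ! : ℝ)
  refine ⟨1 + 3 * P * N ^ 2, by positivity, fun A ha₁ i j => ?_⟩
  set a := frob n m A
  have ha₀ : 0 ≤ a := Real.sqrt_nonneg _
  have hentry := abs_le_frob A
  choose b hb hminor using exists_areaMinor_add_smul_single ha₀ ha₁ hentry i j
  rw [(hasDerivAt_areaIntegrand_add_smul_single A i j b hminor).deriv]
  have hq : ∑ k, ∑ l, A k l ^ 2 + ∑ p, areaMinor A p ^ 2 ≤ (1 + P * N ^ 2) * a ^ 2 := by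
    have hnorm : ∑ k, ∑ l, A k l ^ 2 = a ^ 2 := (Real.sq_sqrt (by positivity)).symm
    have := sum_le_card_nsmul univ _ _ fun p _ => areaMinor_sq_le ha₀ ha₁ hentry p
    rw [Finset.card_univ, nsmul_eq_mul] at this
    linarith
  have hr : |∑ p, 2 * areaMinor A p * b p| ≤ P * (2 * N ^ 2 * a ^ 3) := by
    have := sum_le_card_nsmul univ _ _ fun p _ =>
      abs_two_mul_areaMinor_mul_le ha₀ ha₁ hentry (hb p) p
    rw [Finset.card_univ, nsmul_eq_mul] at this
    exact (abs_sum_le_sum_abs _ _).trans this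
  calc _ ≤ |A i j| * (∑ k, ∑ l, A k l ^ 2 + ∑ p, areaMinor A p ^ 2) +
          |∑ p, 2 * areaMinor A p * b p| :=
        abs_div_two_sqrt_one_add_sub_le _ _ _ (by positivity)
    _ ≤ a * ((1 + P * N ^ 2) * a ^ 2) + P * (2 * N ^ 2 * a ^ 3) := by
        gcongr
        exact hentry i j
    _ = (1 + 3 * P * N ^ 2) * a ^ 3 := by ring
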